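/- Let G be a connected finite simple graph on n vertices with even diameter d, let P = v_1 ∼ v_2 ∼ ⋯ ∼ v_{d+1} be a diameter path of G, and suppose η(G) = n − d − 1. If a vertex z not on P has exactly three neighbors on P, then these neighbors are three consecutive vertices v_m, v_{m+1}, v_{m+2} of P with m odd. -/

import Mathlib

open Classical in
/-- The adjacency matrix of a finite simple graph over `ℝ`. -/
noncomputable def adjMat {V : Type} [Fintype V] (G : SimpleGraph V) : Matrix V V ℝ :=
  Matrix.of fun i j => if G.Adj i j then (1 : ℝ) else 0

/-- The nullity `η(G)` of a finite simple graph: the dimension of the kernel of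
its adjacency matrix over `ℝ`. -/
noncomputable def nullity {V : Type} [Fintype V] (G : SimpleGraph V) : ℕ :=
  Module.finrank ℝ (LinearMap.ker (adjMat G).mulVecLin)

/-!
Because `p` is a geodesic, the path neighbours of any vertex lie among three consecutive path
vertices, and the path vertices together with `z` induce a matrix `[[A(P), b], [bᵀ, 0]]`, where
`A(P)` is the adjacency matrix of the path on `d + 1` vertices. For `d` even, `ker A(P)` is
spanned by `u = (1, 0, -1, 0, 1, …)`. If the neighbours of `z` were `p m, p (m+1), p (m+2)` with
`m` odd, then `u ⬝ b = u (m+1) = ±1 ≠ 0`. Pairing a kernel vector `(x, t)` of the bordered matrix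
with `u` then gives `t = 0`, hence `x ∈ span u`, and `b ⬝ x = 0` forces `x = 0`. So
`rank A(G) ≥ d + 2`, contradicting `η(G) = n - d - 1`.
-/

open Matrix SimpleGraph

def altSeq (K : Type*) [Ring K] : ℕ → K
  | 0 => 1
  | 1 => 0
  | k + 2 => -altSeq K k

instance pathGraph.instDecidableRelAdj (n : ℕ) : DecidableRel (pathGraph n).Adj :=
  fun _ _ => decidable_of_iff' _ pathGraph_adj

section Path

variable {K : Type*} [Ring K]

@[simp] lemma altSeq_add_two (k : ℕ) : altSeq K (k + 2) = -altSeq K k := rfl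

lemma altSeq_of_odd {k : ℕ} (hk : Odd k) : altSeq K k = 0 := by
  obtain ⟨t, rfl⟩ := hk
  induction t with
  | zero => rfl
  | succ t ih =>
    rw [show 2 * (t + 1) + 1 = 2 * t + 1 + 2 by ring, altSeq_add_two, ih, neg_zero]

lemma altSeq_ne_zero_of_even [Nontrivial K] {k : ℕ} (hk : Even k) : altSeq K k ≠ 0 := by
  obtain ⟨t, rfl⟩ := hk
  induction t with
  | zero => exact one_ne_zero
  | succ t ih => rwa [show t + 1 + (t + 1) = t + t + 2 by ring, altSeq_add_two, neg_ne_zero]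

lemma pathGraph_adjMatrix_mulVec_apply_zero {n : ℕ} (h : 1 < n) (x : Fin n → K) :
    ((pathGraph n).adjMatrix K *ᵥ x) ⟨0, by omega⟩ = x ⟨1, h⟩ := by
  rw [mulVec, dotProduct, Fintype.sum_eq_single ⟨1, h⟩]
  · simp [adjMatrix_apply, pathGraph_adj]
  · intro j hj
    simp [adjMatrix_apply, pathGraph_adj, Fin.ext_iff] at hj ⊢
    omega

lemma pathGraph_adjMatrix_mulVec_apply_succ {n k : ℕ} (hk : k + 2 < n) (x : Fin n → K) :
    ((pathGraph n).adjMatrix K *ᵥ x) ⟨k + 1, by omega⟩ = x ⟨k, by omega⟩ + x ⟨k + 2, hk⟩ := by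
  rw [mulVec, dotProduct,
    Fintype.sum_eq_add ⟨k, by omega⟩ ⟨k + 2, hk⟩ (by simp [Fin.ext_iff])]
  · simp [adjMatrix_apply, pathGraph_adj]
  · rintro j ⟨hj, hj'⟩
    simp [adjMatrix_apply, pathGraph_adj, Fin.ext_iff] at hj hj' ⊢
    omega

lemma pathGraph_adjMatrix_mulVec_altSeq {d : ℕ} (hd : Even d) :
    (pathGraph (d + 1)).adjMatrix K *ᵥ (fun i : Fin (d + 1) => altSeq K i) = 0 := by
  funext ⟨i, hi⟩
  rcases Nat.even_or_odd i with hi' | ⟨k, rfl⟩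
  · rw [Pi.zero_apply, mulVec, dotProduct]
    refine Finset.sum_eq_zero fun j _ => ?_
    by_cases hij : (pathGraph (d + 1)).Adj ⟨i, hi⟩ j
    · rw [altSeq_of_odd, mul_zero]
      rw [pathGraph_adj] at hij
      rcases hij with h | h
      · rw [← h]; exact hi'.add_one
      · obtain rfl : i = j + 1 := h.symm
        rwa [Nat.even_add_one, Nat.not_even_iff_odd] at hi'
    · simp [adjMatrix_apply, hij]
  · have hk : 2 * k + 2 < d + 1 := by rcases hd with ⟨e, rfl⟩; omega
    rw [pathGraph_adjMatrix_mulVec_apply_succ hk]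
    simp

lemma eq_smul_altSeq_of_pathGraph_mulVec_eq_zero {d : ℕ} {x : Fin (d + 1) → K}
    (hx : (pathGraph (d + 1)).adjMatrix K *ᵥ x = 0) :
    x = x 0 • fun i : Fin (d + 1) => altSeq K i := by
  suffices h : ∀ k (hk : k < d + 1), x ⟨k, hk⟩ = x 0 * altSeq K k from
    funext fun i => h i i.2
  intro k
  induction k using Nat.twoStepInduction with
  | zero => intro _; simp [altSeq]
  | one =>
    intro hk
    have hrow := congrFun hx ⟨0, by omega⟩
    rw [pathGraph_adjMatrix_mulVec_apply_zero hk] at hrow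
    simpa [altSeq] using hrow
  | more k ih _ =>
    intro hk
    have hrow := congrFun hx ⟨k + 1, by omega⟩
    rw [pathGraph_adjMatrix_mulVec_apply_succ hk, Pi.zero_apply, ih (by omega)] at hrow
    rw [altSeq_add_two, mul_neg]
    exact eq_neg_of_add_eq_zero_right hrow

end Path

section Bordered

variable {K n : Type*} [Field K] [Fintype n]

lemma eq_zero_of_fromBlocks_mulVec_eq_zero {A : Matrix n n K} (hA : A.IsSymm) {u b : n → K}
    (hu : A *ᵥ u = 0) (hker : ∀ x, A *ᵥ x = 0 → ∃ s : K, x = s • u) (hub : u ⬝ᵥ b ≠ 0)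
    {w : n ⊕ Unit → K}
    (hw : fromBlocks A (replicateCol Unit b) (replicateRow Unit b) 0 *ᵥ w = 0) : w = 0 := by
  obtain ⟨x, t, rfl⟩ : ∃ x t, w = Sum.elim x fun _ => t :=
    ⟨w ∘ Sum.inl, w (Sum.inr ()), by ext (i | i) <;> rfl⟩
  rw [fromBlocks_mulVec] at hw
  have hx : A *ᵥ x + t • b = 0 := funext fun i => by
    simpa [mulVec, dotProduct, mul_comm] using congrFun hw (Sum.inl i)
  have hbx : b ⬝ᵥ x = 0 := by simpa [mulVec, dotProduct] using congrFun hw (Sum.inr ())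
  have ht : t = 0 := by
    have huA : u ⬝ᵥ (A *ᵥ x) = 0 := by
      rw [dotProduct_mulVec, ← hA.eq, vecMul_transpose, hu, zero_dotProduct]
    have := congrArg (u ⬝ᵥ ·) hx
    simp only [dotProduct_add, huA, dotProduct_smul, smul_eq_mul, zero_add,
      dotProduct_zero] at this
    exact (mul_eq_zero.mp this).resolve_right hub
  obtain ⟨s, hs⟩ := hker x (by simpa [ht] using hx)
  have hs0 : s = 0 := by
    rw [hs, dotProduct_smul, smul_eq_mul, dotProduct_comm] at hbx
    exact (mul_eq_zero.mp hbx).resolve_right hub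
  funext i
  rcases i with i | ⟨⟩
  · simpa [hs0] using congrFun hs i
  · exact ht

lemma rank_eq_card_of_mulVec_eq_zero [DecidableEq n] {M : Matrix n n K}
    (hM : ∀ w, M *ᵥ w = 0 → w = 0) : M.rank = Fintype.card n :=
  rank_of_isUnit M <| mulVec_injective_iff_isUnit.mp <|
    (injective_iff_map_eq_zero M.mulVecLin).mpr hM

end Bordered

namespace SimpleGraph.Connected

variable {V : Type*} {G : SimpleGraph V} {d : ℕ} {p : Fin (d + 1) → V}

lemma dist_le_sub_of_adj_succ (hG : G.Connected)
    (hadj : ∀ i : Fin d, G.Adj (p i.castSucc) (p i.succ)) {i j : Fin (d + 1)} (hij : i ≤ j) :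
    G.dist (p i) (p j) ≤ j - i := by
  induction j using Fin.induction with
  | zero => simp [Fin.le_zero_iff.mp hij]
  | succ j ih =>
    rcases hij.lt_or_eq with hlt | rfl
    · have hstep : G.dist (p j.castSucc) (p j.succ) = 1 := dist_eq_one_iff_adj.mpr (hadj j)
      have htri := hG.dist_triangle (u := p i) (v := p j.castSucc) (w := p j.succ)
      have hih := ih (Fin.le_castSucc_iff.mpr hlt)
      rw [Fin.val_castSucc] at hih
      rw [Fin.val_succ]
      have := Fin.lt_def.mp hlt
      rw [Fin.val_succ] at this
      omega
    · simp

lemma dist_eq_sub_of_dist_eq (hG : G.Connected)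
    (hadj : ∀ i : Fin d, G.Adj (p i.castSucc) (p i.succ))
    (hdist : G.dist (p 0) (p (Fin.last d)) = d) {i j : Fin (d + 1)} (hij : i ≤ j) :
    G.dist (p i) (p j) = j - i := by
  have h0i : G.dist (p 0) (p i) ≤ i := by
    simpa using hG.dist_le_sub_of_adj_succ hadj (Fin.zero_le i)
  have hij' := hG.dist_le_sub_of_adj_succ hadj hij
  have hjd : G.dist (p j) (p (Fin.last d)) ≤ d - j := by
    simpa using hG.dist_le_sub_of_adj_succ hadj (Fin.le_last j)
  have := hG.dist_triangle (u := p 0) (v := p i) (w := p j)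
  have := hG.dist_triangle (u := p 0) (v := p j) (w := p (Fin.last d))
  have := Fin.le_iff_val_le_val.mp hij
  omega

lemma adj_iff_pathGraph_adj (hG : G.Connected)
    (hadj : ∀ i : Fin d, G.Adj (p i.castSucc) (p i.succ))
    (hdist : G.dist (p 0) (p (Fin.last d)) = d) (i j : Fin (d + 1)) :
    G.Adj (p i) (p j) ↔ (pathGraph (d + 1)).Adj i j := by
  rw [← dist_eq_one_iff_adj, pathGraph_adj]
  rcases le_total i j with hij | hij
  · rw [hG.dist_eq_sub_of_dist_eq hadj hdist hij]
    have := Fin.le_iff_val_le_val.mp hij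
    omega
  · rw [dist_comm, hG.dist_eq_sub_of_dist_eq hadj hdist hij]
    have := Fin.le_iff_val_le_val.mp hij
    omega

lemma le_add_two_of_adj_of_adj (hG : G.Connected)
    (hadj : ∀ i : Fin d, G.Adj (p i.castSucc) (p i.succ))
    (hdist : G.dist (p 0) (p (Fin.last d)) = d) {z : V} {i j : Fin (d + 1)}
    (hi : G.Adj z (p i)) (hj : G.Adj z (p j)) : (j : ℕ) ≤ i + 2 := by
  rcases le_total i j with hij | hij
  · have h := hG.dist_triangle (u := p i) (v := z) (w := p j)
    rw [hG.dist_eq_sub_of_dist_eq hadj hdist hij, dist_comm, dist_eq_one_iff_adj.mpr hi,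
      dist_eq_one_iff_adj.mpr hj] at h
    omega
  · exact (Fin.le_iff_val_le_val.mp hij).trans (Nat.le_add_right _ _)

end SimpleGraph.Connected

lemma Fin.exists_consecutive_of_card_eq_three {n : ℕ} {s : Finset (Fin n)} (hs : s.card = 3)
    (hclose : ∀ a ∈ s, ∀ b ∈ s, (b : ℕ) ≤ a + 2) :
    ∃ m, m + 2 < n ∧ ∀ i : Fin n, i ∈ s ↔ (i : ℕ) = m ∨ (i : ℕ) = m + 1 ∨ (i : ℕ) = m + 2 := by
  obtain ⟨a, b, c, hab, hac, hbc, rfl⟩ := Finset.card_eq_three.mp hs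
  simp only [Finset.mem_insert, Finset.mem_singleton, forall_eq_or_imp, forall_eq] at hclose
  simp only [ne_eq, Fin.ext_iff] at hab hac hbc
  refine ⟨min (min a b) c, by omega, fun i => ?_⟩
  simp only [Finset.mem_insert, Finset.mem_singleton, Fin.ext_iff]
  omega

section AdjMat

variable {V : Type} [Fintype V] (G : SimpleGraph V)

open Classical in
lemma adjMat_apply (x y : V) : adjMat G x y = if G.Adj x y then 1 else 0 := rfl

lemma rank_adjMat_add_nullity : (adjMat G).rank + nullity G = Fintype.card V := by
  rw [rank, nullity, LinearMap.finrank_range_add_finrank_ker, Module.finrank_fintype_fun_eq_card]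

lemma adjMat_submatrix_sum_elim {ι : Type*} (p : ι → V) (z : V) :
    (adjMat G).submatrix (Sum.elim p fun _ : Unit => z) (Sum.elim p fun _ => z) =
      fromBlocks ((adjMat G).submatrix p p) (replicateCol Unit fun i => adjMat G (p i) z)
        (replicateRow Unit fun i => adjMat G z (p i)) 0 := by
  ext (i | i) (j | j) <;> simp [adjMat_apply]

end AdjMat

lemma SimpleGraph.Connected.add_two_le_rank_adjMat {V : Type} [Fintype V] {G : SimpleGraph V}
    (hG : G.Connected) {d : ℕ} (hd : Even d) {p : Fin (d + 1) → V}
    (hadj : ∀ i : Fin d, G.Adj (p i.castSucc) (p i.succ))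
    (hdist : G.dist (p 0) (p (Fin.last d)) = d) {z : V} {m : ℕ} (hm : Odd m) (hmd : m + 2 ≤ d)
    (hS : ∀ i : Fin (d + 1), G.Adj z (p i) ↔ (i : ℕ) = m ∨ (i : ℕ) = m + 1 ∨ (i : ℕ) = m + 2) :
    d + 2 ≤ (adjMat G).rank := by
  set b : Fin (d + 1) → ℝ :=
    Pi.single ⟨m, by omega⟩ 1 + Pi.single ⟨m + 1, by omega⟩ 1 + Pi.single ⟨m + 2, by omega⟩ 1
  have hblock : (adjMat G).submatrix (Sum.elim p fun _ : Unit => z) (Sum.elim p fun _ => z) =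
      fromBlocks ((pathGraph (d + 1)).adjMatrix ℝ) (replicateCol Unit b)
        (replicateRow Unit b) 0 := by
    rw [adjMat_submatrix_sum_elim]
    congr
    · ext i j
      simp [adjMat_apply, adjMatrix_apply, hG.adj_iff_pathGraph_adj hadj hdist]
    all_goals
      funext i
      simp only [adjMat_apply, ← G.adj_comm z, hS, b, Pi.add_apply, Pi.single_apply,
        Fin.ext_iff]
      split_ifs <;> norm_num <;> omega
  have hub : (fun i : Fin (d + 1) => altSeq ℝ i) ⬝ᵥ b ≠ 0 := by
    simp only [b, dotProduct_add, dotProduct_single, mul_one, altSeq_add_two,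
      altSeq_of_odd hm]
    simpa using altSeq_ne_zero_of_even (K := ℝ) hm.add_one
  have hrank := rank_eq_card_of_mulVec_eq_zero fun _ =>
    eq_zero_of_fromBlocks_mulVec_eq_zero (isSymm_adjMatrix _)
      (pathGraph_adjMatrix_mulVec_altSeq hd)
      (fun x hx => ⟨_, eq_smul_altSeq_of_pathGraph_mulVec_eq_zero hx⟩) hub
  calc d + 2 = Fintype.card (Fin (d + 1) ⊕ Unit) := by simp
    _ = _ := by rw [← hrank, hblock]
    _ ≤ _ := rank_submatrix_le _ _ _

theorem stmt16_general {V : Type} [Fintype V] (G : SimpleGraph V) [DecidableRel G.Adj]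
    (hG : G.Connected) (heven : Even G.diam)
    (p : Fin (G.diam + 1) → V)
    (hadj : ∀ i : Fin G.diam, G.Adj (p i.castSucc) (p i.succ))
    (hdist : G.dist (p 0) (p (Fin.last G.diam)) = G.diam)
    (hnull : nullity G = Fintype.card V - G.diam - 1)
    (z : V)
    (h3 : (Finset.univ.filter fun i : Fin (G.diam + 1) => G.Adj z (p i)).card = 3) :
    ∃ m : ℕ, Odd (m + 1) ∧ m + 2 ≤ G.diam ∧
      ∀ i : Fin (G.diam + 1), G.Adj z (p i) ↔
        ((i : ℕ) = m ∨ (i : ℕ) = m + 1 ∨ (i : ℕ) = m + 2) := by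
  obtain ⟨m, hm, hS⟩ := Fin.exists_consecutive_of_card_eq_three h3 fun a ha b hb =>
    hG.le_add_two_of_adj_of_adj hadj hdist (Finset.mem_filter.mp ha).2
      (Finset.mem_filter.mp hb).2
  simp only [Finset.mem_filter, Finset.mem_univ, true_and] at hS
  refine ⟨m, ?_, by omega, hS⟩
  by_contra hm_even
  have hrank := hG.add_two_le_rank_adjMat heven hadj hdist
    (by simpa [Nat.odd_add_one] using hm_even) (by omega) hS
  have := rank_adjMat_add_nullity G
  omega

/-- Let `G` be connected with even diameter `d`, let `p 0 ∼ ⋯ ∼ p d` be a diameter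
path (so `p i` is the vertex `v_{i+1}` in 1-indexed notation), and suppose
`η(G) = n - d - 1`. If a vertex `z` not on the path has exactly three neighbours on
the path, then they are three consecutive vertices `p m, p (m+1), p (m+2)`
(i.e. `v_{m+1}, v_{m+2}, v_{m+3}`) whose first 1-indexed position `m + 1` is odd. -/
theorem stmt16 {V : Type} [Fintype V] (G : SimpleGraph V) [DecidableRel G.Adj]
    (hG : G.Connected) (heven : Even G.diam)
    (p : Fin (G.diam + 1) → V)
    (hadj : ∀ i : Fin G.diam, G.Adj (p i.castSucc) (p i.succ))
    (hdist : G.dist (p 0) (p (Fin.last G.diam)) = G.diam)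
    (hnull : nullity G = Fintype.card V - G.diam - 1)
    (z : V) (hz : z ∉ Set.range p)
    (h3 : (Finset.univ.filter fun i : Fin (G.diam + 1) => G.Adj z (p i)).card = 3) :
    ∃ m : ℕ, Odd (m + 1) ∧ m + 2 ≤ G.diam ∧
      ∀ i : Fin (G.diam + 1), G.Adj z (p i) ↔
        ((i : ℕ) = m ∨ (i : ℕ) = m + 1 ∨ (i : ℕ) = m + 2) :=
  stmt16_general G hG heven p hadj hdist hnull z h3
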